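/- Let k ≥ 2 and n = 2k+1. The invariant ring Sᵀ (the ℂ-subalgebra of S = ℂ[x₁, x₂, x_{2k}, y₀, y₁, …, y_{2k}] consisting of all polynomials each of whose monomials has ℤ^{2k+1}-weight 0) equals the ℂ-subalgebra generated by the six monomials Z₁ = x_{2k}² y₀² y₁ y₂ ∏_{j=3}^{2k} y_j², Z₂ = x₁ x₂ y₀^{2k−1} y₁^{k} y₂^{k} ∏_{j=3}^{2k} y_j^{2k+1−j}, Z₃ = x₂² x_{2k} y₀^{2k} y₁^{k} y₂^{k+1} ∏_{j=3}^{2k} y_j^{2k+2−j}, Z₄ = x₁² x_{2k} y₀^{2k} y₁^{k+1} y₂^{k} ∏_{j=3}^{2k} y_j^{2k+2−j}, Z₅ = x₂⁴ y₀^{4k−2} y₁^{2k−1} y₂^{2k+1} ∏_{j=3}^{2k} y_j^{4k+2−2j}, and Z₆ = x₁⁴ y₀^{4k−2} y₁^{2k+1} y₂^{2k−1} ∏_{j=3}^{2k} y_j^{4k+2−2j}. -/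

import Mathlib

open MvPolynomial

/-- The subalgebra of an `Fin n`-multigraded polynomial ring consisting of the polynomials
all of whose monomials have weight zero (the ring of invariants of the torus action
with weights `w`). -/
noncomputable def invariants {m n : ℕ} (w : Fin m → Fin n → ℤ) :
    Subalgebra ℂ (MvPolynomial (Fin m) ℂ) where
  carrier := {p | ∀ d ∈ p.support, ∀ i : Fin n, ∑ v, (d v : ℤ) * w v i = 0}
  zero_mem' := by
    intro d hd i
    simp at hd
  one_mem' := by
    intro d hd i
    have hd' : d = 0 := by
      by_contra h
      have := MvPolynomial.mem_support_iff.mp hd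
      rw [show (1 : MvPolynomial (Fin m) ℂ) = C 1 from (map_one C).symm,
        MvPolynomial.coeff_C, if_neg (Ne.symm h)] at this
      exact this rfl
    subst hd'
    simp
  add_mem' := by
    intro p q hp hq d hd i
    rcases Finset.mem_union.mp (MvPolynomial.support_add hd) with h | h
    · exact hp d h i
    · exact hq d h i
  mul_mem' := by
    intro p q hp hq d hd i
    obtain ⟨a, ha, b, hb, rfl⟩ := Finset.mem_add.mp (MvPolynomial.support_mul p q hd)
    have key : ∀ v : Fin m, (((a + b) v : ℤ)) * w v i
        = (a v : ℤ) * w v i + (b v : ℤ) * w v i := by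
      intro v
      rw [Finsupp.add_apply]
      push_cast
      ring
    rw [Finset.sum_congr rfl fun v _ => key v, Finset.sum_add_distrib,
      hp a ha i, hq b hb i, add_zero]
  algebraMap_mem' := by
    intro r d hd i
    have hd' : d = 0 := by
      by_contra h
      have := MvPolynomial.mem_support_iff.mp hd
      rw [MvPolynomial.algebraMap_eq, MvPolynomial.coeff_C, if_neg (Ne.symm h)] at this
      exact this rfl
    subst hd'
    simp

/-- Weights of the torus action for the `D_n` singularity: the variables of
`S = ℂ[x₁, x₂, x_{n-1}, y₀, y₁, …, y_{n-1}]` are indexed by `Fin (n+3)` with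
`0 ↦ x₁`, `1 ↦ x₂`, `2 ↦ x_{n-1}` and `3+m ↦ y_m`; the coordinate `i : Fin n`
corresponds to the basis vector `e_i` of `ℤⁿ`.  Thus `w(x₁) = e₁`, `w(x₂) = e₂`,
`w(x_{n-1}) = e_{n-1}`, `w(y₀) = -2e₀+e₁+e₂+e₃`, `w(y₁) = e₀-2e₁`, `w(y₂) = e₀-2e₂`,
`w(y₃) = e₀-2e₃+e₄`, `w(y_m) = e_{m-1}-2e_m+e_{m+1}` for `4 ≤ m ≤ n-2` and
`w(y_{n-1}) = e_{n-2}-2e_{n-1}`. -/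
def wD (n : ℕ) (v : Fin (n + 3)) (i : Fin n) : ℤ :=
  if (v : ℕ) = 0 then (if (i : ℕ) = 1 then 1 else 0)
  else if (v : ℕ) = 1 then (if (i : ℕ) = 2 then 1 else 0)
  else if (v : ℕ) = 2 then (if (i : ℕ) = n - 1 then 1 else 0)
  else if (v : ℕ) = 3 then
    (if (i : ℕ) = 0 then -2 else if (i : ℕ) = 1 ∨ (i : ℕ) = 2 ∨ (i : ℕ) = 3 then 1 else 0)
  else if (v : ℕ) = 4 then (if (i : ℕ) = 0 then 1 else if (i : ℕ) = 1 then -2 else 0)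
  else if (v : ℕ) = 5 then (if (i : ℕ) = 0 then 1 else if (i : ℕ) = 2 then -2 else 0)
  else if (v : ℕ) = 6 then
    (if (i : ℕ) = 0 then 1 else 0) + (if (i : ℕ) = 3 then -2 else 0)
      + (if (i : ℕ) = 4 then 1 else 0)
  else
    (if (i : ℕ) = (v : ℕ) - 4 then 1 else 0) + (if (i : ℕ) = (v : ℕ) - 3 then -2 else 0)
      + (if (i : ℕ) = (v : ℕ) - 2 then 1 else 0)

/-- The variable of index `a` in `S = ℂ[x₁, x₂, x_{n-1}, y₀, y₁, …, y_{n-1}]`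
(indices as in `wD`: `0 ↦ x₁`, `1 ↦ x₂`, `2 ↦ x_{n-1}`, `3+m ↦ y_m`). -/
noncomputable def vD (n : ℕ) (a : ℕ) : MvPolynomial (Fin (n + 3)) ℂ :=
  MvPolynomial.X ⟨a % (n + 3), Nat.mod_lt a (by omega)⟩

/-- The invariant monomial `Z₁ = x_{2k}² y₀² y₁ y₂ ∏_{j=3}^{2k} y_j²`. -/
noncomputable def OZ₁ (k : ℕ) : MvPolynomial (Fin (2 * k + 1 + 3)) ℂ :=
  vD (2 * k + 1) 2 ^ 2 * vD (2 * k + 1) 3 ^ 2 * vD (2 * k + 1) 4 * vD (2 * k + 1) 5 *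
    ∏ j ∈ Finset.Icc 3 (2 * k), vD (2 * k + 1) (j + 3) ^ 2

/-- The invariant monomial `Z₂ = x₁ x₂ y₀^{2k-1} y₁^k y₂^k ∏_{j=3}^{2k} y_j^{2k+1-j}`. -/
noncomputable def OZ₂ (k : ℕ) : MvPolynomial (Fin (2 * k + 1 + 3)) ℂ :=
  vD (2 * k + 1) 0 * vD (2 * k + 1) 1 * vD (2 * k + 1) 3 ^ (2 * k - 1) *
      vD (2 * k + 1) 4 ^ k * vD (2 * k + 1) 5 ^ k *
    ∏ j ∈ Finset.Icc 3 (2 * k), vD (2 * k + 1) (j + 3) ^ (2 * k + 1 - j)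

/-- The invariant monomial `Z₃ = x₂² x_{2k} y₀^{2k} y₁^k y₂^{k+1} ∏_{j=3}^{2k} y_j^{2k+2-j}`. -/
noncomputable def OZ₃ (k : ℕ) : MvPolynomial (Fin (2 * k + 1 + 3)) ℂ :=
  vD (2 * k + 1) 1 ^ 2 * vD (2 * k + 1) 2 * vD (2 * k + 1) 3 ^ (2 * k) *
      vD (2 * k + 1) 4 ^ k * vD (2 * k + 1) 5 ^ (k + 1) *
    ∏ j ∈ Finset.Icc 3 (2 * k), vD (2 * k + 1) (j + 3) ^ (2 * k + 2 - j)

/-- The invariant monomial `Z₄ = x₁² x_{2k} y₀^{2k} y₁^{k+1} y₂^k ∏_{j=3}^{2k} y_j^{2k+2-j}`. -/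
noncomputable def OZ₄ (k : ℕ) : MvPolynomial (Fin (2 * k + 1 + 3)) ℂ :=
  vD (2 * k + 1) 0 ^ 2 * vD (2 * k + 1) 2 * vD (2 * k + 1) 3 ^ (2 * k) *
      vD (2 * k + 1) 4 ^ (k + 1) * vD (2 * k + 1) 5 ^ k *
    ∏ j ∈ Finset.Icc 3 (2 * k), vD (2 * k + 1) (j + 3) ^ (2 * k + 2 - j)

/-- The invariant monomial `Z₅ = x₂⁴ y₀^{4k-2} y₁^{2k-1} y₂^{2k+1} ∏_{j=3}^{2k} y_j^{4k+2-2j}`. -/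
noncomputable def OZ₅ (k : ℕ) : MvPolynomial (Fin (2 * k + 1 + 3)) ℂ :=
  vD (2 * k + 1) 1 ^ 4 * vD (2 * k + 1) 3 ^ (4 * k - 2) * vD (2 * k + 1) 4 ^ (2 * k - 1) *
      vD (2 * k + 1) 5 ^ (2 * k + 1) *
    ∏ j ∈ Finset.Icc 3 (2 * k), vD (2 * k + 1) (j + 3) ^ (4 * k + 2 - 2 * j)

/-- The invariant monomial `Z₆ = x₁⁴ y₀^{4k-2} y₁^{2k+1} y₂^{2k-1} ∏_{j=3}^{2k} y_j^{4k+2-2j}`. -/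
noncomputable def OZ₆ (k : ℕ) : MvPolynomial (Fin (2 * k + 1 + 3)) ℂ :=
  vD (2 * k + 1) 0 ^ 4 * vD (2 * k + 1) 3 ^ (4 * k - 2) * vD (2 * k + 1) 4 ^ (2 * k + 1) *
      vD (2 * k + 1) 5 ^ (2 * k - 1) *
    ∏ j ∈ Finset.Icc 3 (2 * k), vD (2 * k + 1) (j + 3) ^ (4 * k + 2 - 2 * j)

/-!
A polynomial is invariant exactly when all of its monomials are, so the invariant ring is
spanned by the monomials whose exponent vectors lie in the kernel of the weight map, and it
suffices to show that this monoid is generated by the exponent vectors of `Z₁, …, Z₆`.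

The weight equations at `e₃, …, e_{n-1}` say that the exponents along the long arm
`y₀, y₃, y₄, …, y_{n-1}, x_{n-1}` of the `D_n` diagram form an arithmetic progression, with
difference `-E` say. Together with the equations at `e₀, e₁, e₂` this shows that an invariant
monomial is determined by its exponents `(a₀, a₁, a₂)` in `x₁, x₂, x_{n-1}`, and that these
satisfy `a₀ + a₁ = 2E` and, `n` being odd, `a₀ + a₂ + E ≡ 0 mod 2`. The monoid of such triples is
generated by `(0,0,2), (1,1,0), (0,2,1), (2,0,1), (0,4,0), (4,0,0)`, the `x`-exponents of
`Z₁, …, Z₆`.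
-/

open Finsupp

lemma MvPolynomial.monomial_one_mem_adjoin_of_mem_closure {σ R : Type*} [CommSemiring R]
    {S : Set (σ →₀ ℕ)} {d : σ →₀ ℕ} (hd : d ∈ AddSubmonoid.closure S) :
    monomial d (1 : R) ∈ Algebra.adjoin R ((fun d => monomial d (1 : R)) '' S) := by
  induction hd using AddSubmonoid.closure_induction with
  | mem d hd => exact Algebra.subset_adjoin ⟨d, hd, rfl⟩
  | zero => exact Subalgebra.one_mem _
  | add a b _ _ ha hb => simpa [monomial_mul] using mul_mem ha hb

section Invariants

variable {m n : ℕ} (w : Fin m → Fin n → ℤ)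

lemma weight_apply_eq_sum (d : Fin m →₀ ℕ) (i : Fin n) :
    weight w d i = ∑ v, (d v : ℤ) * w v i := by
  simp [weight_apply, Finsupp.sum_fintype]

lemma mem_invariants_iff {p : MvPolynomial (Fin m) ℂ} :
    p ∈ invariants w ↔ ∀ d ∈ p.support, weight w d = 0 := by
  simp [invariants, _root_.funext_iff, weight_apply_eq_sum]

theorem invariants_eq_adjoin_monomial (S : Set (Fin m →₀ ℕ))
    (hS : AddSubmonoid.closure S = AddMonoidHom.mker (weight w)) :
    invariants w = Algebra.adjoin ℂ ((fun d => monomial d (1 : ℂ)) '' S) := by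
  apply le_antisymm
  · intro p hp
    rw [p.as_sum]
    refine Subalgebra.sum_mem _ fun d hd => ?_
    rw [← mul_one (coeff d p), ← smul_eq_mul, ← smul_monomial]
    exact Subalgebra.smul_mem _ (monomial_one_mem_adjoin_of_mem_closure
      (hS ▸ (mem_invariants_iff w).1 hp d hd)) _
  · rw [Algebra.adjoin_le_iff]
    rintro _ ⟨d, hd, rfl⟩
    have hd : weight w d = 0 := AddMonoidHom.mem_mker.1 (hS ▸ AddSubmonoid.subset_closure hd)
    rw [SetLike.mem_coe, mem_invariants_iff]
    intro d' hd'
    rwa [Finset.mem_singleton.1 (support_monomial_subset hd')]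

def exponentAt [NeZero m] (d : Fin m →₀ ℕ) (a : ℕ) : ℤ := d (Fin.ofNat m a)

lemma weight_apply_eq_sum_of_support [NeZero m] (d : Fin m →₀ ℕ) (i : Fin n) {s : Finset ℕ}
    (hs : ∀ a ∈ s, a < m) (hw : ∀ a < m, a ∉ s → w (Fin.ofNat m a) i = 0) :
    weight w d i = ∑ a ∈ s, exponentAt d a * w (Fin.ofNat m a) i := by
  rw [Finset.sum_subset (fun a ha => Finset.mem_range.2 (hs a ha))
    (fun a ha has => by rw [hw a (Finset.mem_range.1 ha) has, mul_zero]),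
    ← Fin.sum_univ_eq_sum_range (fun a => exponentAt d a * w (Fin.ofNat m a) i)]
  simp [weight_apply_eq_sum, exponentAt]

end Invariants

lemma Int.eq_add_mul_sub_of_add_eq_two_mul {c : ℕ → ℤ} {N : ℕ}
    (h : ∀ i, i + 2 ≤ N → c i + c (i + 2) = 2 * c (i + 1)) :
    ∀ i ≤ N, c i = c 0 + i * (c 1 - c 0) := by
  intro i
  induction i using Nat.strong_induction_on with
  | _ i ih =>
    intro hi
    match i with
    | 0 => simp
    | 1 => ring
    | i + 2 =>
      have h := h i hi
      rw [ih i (by omega) (by omega), ih (i + 1) (by omega) (by omega)] at h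
      push_cast at h ⊢
      linarith

namespace WeightsD

variable {n : ℕ} (d : Fin (n + 3) →₀ ℕ)

/-- Positions of `y₀, y₃, y₄, …, y_{n-1}, x_{n-1}`, the long arm of the `D_n` diagram. -/
def armIndex (n i : ℕ) : ℕ := if i = 0 then 3 else if i = n - 2 then 2 else i + 5

def armExponent (i : ℕ) : ℤ := exponentAt d (armIndex n i)

lemma armExponent_zero : armExponent d 0 = exponentAt d 3 := rfl

lemma armExponent_of_pos {i : ℕ} (h0 : 0 < i) (hi : i < n - 2) :
    armExponent d i = exponentAt d (i + 5) := by
  rw [armExponent, armIndex, if_neg (by omega), if_neg (by omega)]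

lemma armExponent_sub_two (hn : 3 ≤ n) : armExponent d (n - 2) = exponentAt d 2 := by
  rw [armExponent, armIndex, if_neg (by omega), if_pos rfl]

lemma weight_wD_zero (hn : 5 ≤ n) :
    weight (wD n) d ⟨0, by omega⟩ =
      exponentAt d 4 + exponentAt d 5 + exponentAt d 6 - 2 * exponentAt d 3 := by
  rw [weight_apply_eq_sum_of_support (wD n) d ⟨0, by omega⟩ (s := {3, 4, 5, 6}) (by simp; omega)
    fun a ha has => by
      simp only [Finset.mem_insert, Finset.mem_singleton, not_or] at has
      simp only [wD, Fin.val_ofNat, Nat.mod_eq_of_lt ha]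
      split_ifs <;> first | omega | contradiction]
  rw [Finset.sum_insert (by simp), Finset.sum_insert (by simp), Finset.sum_insert (by simp),
    Finset.sum_singleton]
  simp (disch := omega) only [wD, Fin.val_ofNat, Nat.mod_eq_of_lt, if_pos, if_neg, if_true]
  ring

lemma weight_wD_one (hn : 5 ≤ n) :
    weight (wD n) d ⟨1, by omega⟩ =
      exponentAt d 0 + exponentAt d 3 - 2 * exponentAt d 4 := by
  rw [weight_apply_eq_sum_of_support (wD n) d ⟨1, by omega⟩ (s := {0, 3, 4}) (by simp; omega)
    fun a ha has => by
      simp only [Finset.mem_insert, Finset.mem_singleton, not_or] at has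
      simp only [wD, Fin.val_ofNat, Nat.mod_eq_of_lt ha]
      split_ifs <;> first | omega | contradiction]
  rw [Finset.sum_insert (by simp), Finset.sum_insert (by simp), Finset.sum_singleton]
  simp (disch := omega) only [wD, Fin.val_ofNat, Nat.mod_eq_of_lt, if_pos, if_neg, if_true, true_or]
  ring

lemma weight_wD_two (hn : 5 ≤ n) :
    weight (wD n) d ⟨2, by omega⟩ =
      exponentAt d 1 + exponentAt d 3 - 2 * exponentAt d 5 := by
  rw [weight_apply_eq_sum_of_support (wD n) d ⟨2, by omega⟩ (s := {1, 3, 5}) (by simp; omega)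
    fun a ha has => by
      simp only [Finset.mem_insert, Finset.mem_singleton, not_or] at has
      simp only [wD, Fin.val_ofNat, Nat.mod_eq_of_lt ha]
      split_ifs <;> first | omega | contradiction]
  rw [Finset.sum_insert (by simp), Finset.sum_insert (by simp), Finset.sum_singleton]
  simp (disch := omega) only [wD, Fin.val_ofNat, Nat.mod_eq_of_lt, if_pos, if_neg,
    if_true, or_true, true_or]
  ring

lemma weight_wD_arm_zero (hn : 5 ≤ n) :
    weight (wD n) d ⟨3, by omega⟩ =
      armExponent d 0 + armExponent d 2 - 2 * armExponent d 1 := by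
  rw [weight_apply_eq_sum_of_support (wD n) d ⟨3, by omega⟩ (s := {3, 6, 7}) (by simp; omega)
    fun a ha has => by
      simp only [Finset.mem_insert, Finset.mem_singleton, not_or] at has
      simp only [wD, Fin.val_ofNat, Nat.mod_eq_of_lt ha]
      split_ifs <;> first | omega | contradiction]
  rw [Finset.sum_insert (by simp), Finset.sum_insert (by simp), Finset.sum_singleton]
  simp (disch := omega) only [armExponent, armIndex, wD, Fin.val_ofNat, Nat.mod_eq_of_lt,
    if_pos, if_neg, if_true, or_true]
  ring

lemma weight_wD_arm_last (hn : 5 ≤ n) (i : ℕ) (hi : i + 4 = n) :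
    weight (wD n) d ⟨i + 3, by omega⟩ =
      armExponent d i + armExponent d (i + 2) - 2 * armExponent d (i + 1) := by
  rw [weight_apply_eq_sum_of_support (wD n) d ⟨i + 3, by omega⟩ (s := {2, i + 5, i + 6})
    (by simp; omega) fun a ha has => by
      simp only [Finset.mem_insert, Finset.mem_singleton, not_or] at has
      simp only [wD, Fin.val_ofNat, Nat.mod_eq_of_lt ha]
      split_ifs <;> first | omega | contradiction]
  rw [Finset.sum_insert (by simp), Finset.sum_insert (by simp), Finset.sum_singleton]
  simp (disch := omega) only [armExponent, armIndex, wD, Fin.val_ofNat, Nat.mod_eq_of_lt,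
    if_pos, if_neg, if_true, ite_self]
  ring

lemma weight_wD_arm_mid (i : ℕ) (h1 : 1 ≤ i) (h5 : i + 5 ≤ n) :
    weight (wD n) d ⟨i + 3, by omega⟩ =
      armExponent d i + armExponent d (i + 2) - 2 * armExponent d (i + 1) := by
  rw [weight_apply_eq_sum_of_support (wD n) d ⟨i + 3, by omega⟩ (s := {i + 5, i + 6, i + 7})
    (by simp; omega) fun a ha has => by
      simp only [Finset.mem_insert, Finset.mem_singleton, not_or] at has
      simp only [wD, Fin.val_ofNat, Nat.mod_eq_of_lt ha]
      split_ifs <;> first | omega | contradiction]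
  rw [Finset.sum_insert (by simp), Finset.sum_insert (by simp), Finset.sum_singleton]
  simp (disch := omega) only [armExponent, armIndex, wD, Fin.val_ofNat, Nat.mod_eq_of_lt,
    if_pos, if_neg, ite_self]
  ring

lemma weight_wD_arm (hn : 5 ≤ n) (i : ℕ) (hi : i + 4 ≤ n) :
    weight (wD n) d ⟨i + 3, by omega⟩ =
      armExponent d i + armExponent d (i + 2) - 2 * armExponent d (i + 1) := by
  rcases (by omega : i = 0 ∨ i + 4 = n ∨ (1 ≤ i ∧ i + 5 ≤ n)) with h0 | hlast | ⟨h1, h5⟩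
  · subst h0
    exact weight_wD_arm_zero d hn
  · exact weight_wD_arm_last d hn i hlast
  · exact weight_wD_arm_mid d i h1 h5

theorem weight_wD_eq_zero_iff (hn : 5 ≤ n) :
    weight (wD n) d = 0 ↔ ∃ E : ℤ, exponentAt d 0 + exponentAt d 1 = 2 * E ∧
      2 * exponentAt d 4 = exponentAt d 0 + exponentAt d 3 ∧
      2 * exponentAt d 5 = exponentAt d 1 + exponentAt d 3 ∧
      ∀ i ≤ n - 2, armExponent d i = exponentAt d 3 - i * E := by
  have h6 := armExponent_of_pos d (i := 1) one_pos (by omega)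
  constructor
  · intro h
    have row (t : ℕ) (ht : t < n) : weight (wD n) d ⟨t, ht⟩ = 0 := by rw [h]; rfl
    have h0 := weight_wD_zero d hn ▸ row 0 (by omega)
    have h1 := weight_wD_one d hn ▸ row 1 (by omega)
    have h2 := weight_wD_two d hn ▸ row 2 (by omega)
    have harm := Int.eq_add_mul_sub_of_add_eq_two_mul (c := armExponent d) (N := n - 2)
      fun i hi => by linarith [weight_wD_arm d hn i (by omega) ▸ row (i + 3) (by omega)]
    refine ⟨exponentAt d 3 - exponentAt d 6, by linarith, by linarith, by linarith, fun i hi => ?_⟩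
    rw [harm i hi, h6, armExponent_zero]
    ring
  · rintro ⟨E, h01, h4, h5, harm⟩
    ext ⟨t, ht⟩
    have hE : exponentAt d 6 = exponentAt d 3 - E := by
      rw [← h6, harm 1 (by omega)]
      ring
    rw [Pi.zero_apply]
    rcases (by omega : t = 0 ∨ t = 1 ∨ t = 2 ∨ 3 ≤ t) with rfl | rfl | rfl | h3
    · rw [weight_wD_zero d hn]
      linarith
    · rw [weight_wD_one d hn]
      linarith
    · rw [weight_wD_two d hn]
      linarith
    · obtain ⟨i, rfl⟩ : ∃ i, t = i + 3 := ⟨t - 3, by omega⟩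
      rw [weight_wD_arm d hn i (by omega), harm i (by omega), harm (i + 1) (by omega),
        harm (i + 2) (by omega)]
      push_cast
      ring

theorem eq_of_weight_wD_eq_zero (hn : 5 ≤ n) {d d' : Fin (n + 3) →₀ ℕ}
    (hd : weight (wD n) d = 0) (hd' : weight (wD n) d' = 0)
    (hx : ∀ a < 3, d (Fin.ofNat _ a) = d' (Fin.ofNat _ a)) : d = d' := by
  replace hx (a : ℕ) (ha : a < 3) : exponentAt d a = exponentAt d' a := by
    rw [exponentAt, exponentAt, hx a ha]
  obtain ⟨E, h01, h4, h5, harm⟩ := (weight_wD_eq_zero_iff d hn).1 hd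
  obtain ⟨E', h01', h4', h5', harm'⟩ := (weight_wD_eq_zero_iff d' hn).1 hd'
  obtain rfl : E = E' := by linarith [hx 0 (by omega), hx 1 (by omega)]
  have h3 : exponentAt d 3 = exponentAt d' 3 := by
    have h := harm (n - 2) le_rfl
    have h' := harm' (n - 2) le_rfl
    rw [armExponent_sub_two _ (by omega)] at h h'
    linarith [hx 2 (by omega)]
  have key (a : ℕ) (ha : a < n + 3) : exponentAt d a = exponentAt d' a := by
    rcases (by omega : a < 3 ∨ a = 3 ∨ a = 4 ∨ a = 5 ∨ 6 ≤ a) with h | rfl | rfl | rfl | h6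
    · exact hx a h
    · exact h3
    · linarith [hx 0 (by omega)]
    · linarith [hx 1 (by omega)]
    · have h := harm (a - 5) (by omega)
      have h' := harm' (a - 5) (by omega)
      rw [armExponent_of_pos _ (by omega) (by omega), show a - 5 + 5 = a by omega] at h h'
      rw [h, h', h3]
  ext v
  simpa [exponentAt] using key v v.isLt

noncomputable def exponentVector (n e₀ e₁ e₂ e₃ e₄ e₅ : ℕ) (g : ℕ → ℕ) : Fin (n + 3) →₀ ℕ :=
  Finsupp.equivFunOnFinite.symm fun v =>
    if (v : ℕ) = 0 then e₀ else if (v : ℕ) = 1 then e₁ else if (v : ℕ) = 2 then e₂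
    else if (v : ℕ) = 3 then e₃ else if (v : ℕ) = 4 then e₄ else if (v : ℕ) = 5 then e₅
    else g (v - 3)

variable (e₀ e₁ e₂ e₃ e₄ e₅ : ℕ) (g : ℕ → ℕ)

lemma exponentVector_ofNat {a : ℕ} (ha : a < n + 3) :
    exponentVector n e₀ e₁ e₂ e₃ e₄ e₅ g (Fin.ofNat _ a) =
      if a = 0 then e₀ else if a = 1 then e₁ else if a = 2 then e₂
      else if a = 3 then e₃ else if a = 4 then e₄ else if a = 5 then e₅ else g (a - 3) := by
  simp only [exponentVector, Finsupp.coe_equivFunOnFinite_symm, Fin.val_ofNat, Nat.mod_eq_of_lt ha]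

lemma monomial_one_eq_prod_range (d : Fin (n + 3) →₀ ℕ) :
    monomial d (1 : ℂ) = ∏ a ∈ Finset.range (n + 3), vD n a ^ d (Fin.ofNat _ a) := by
  rw [monomial_eq, C_1, one_mul, Finsupp.prod_fintype _ _ fun _ => pow_zero _,
    ← Fin.prod_univ_eq_prod_range]
  simp [vD, Nat.mod_eq_of_lt]

lemma monomial_exponentVector (hn : 3 ≤ n) :
    monomial (exponentVector n e₀ e₁ e₂ e₃ e₄ e₅ g) (1 : ℂ) =
      vD n 0 ^ e₀ * vD n 1 ^ e₁ * vD n 2 ^ e₂ * vD n 3 ^ e₃ * vD n 4 ^ e₄ * vD n 5 ^ e₅ *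
        ∏ j ∈ Finset.Icc 3 (n - 1), vD n (j + 3) ^ g j := by
  obtain ⟨m, rfl⟩ : ∃ m, n = m + 3 := ⟨n - 3, by omega⟩
  rw [monomial_one_eq_prod_range, show Finset.range (m + 3 + 3) = Finset.range (6 + m) by ring_nf,
    Finset.prod_range_add, ← Finset.Ico_add_one_right_eq_Icc, Finset.prod_Ico_eq_prod_range,
    show m + 3 - 1 + 1 - 3 = m by omega]
  simp only [Finset.prod_range_succ, Finset.prod_range_zero, one_mul]
  congr 1
  refine Finset.prod_congr rfl fun x hx => ?_
  rw [Finset.mem_range] at hx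
  simp (disch := omega) only [exponentVector, Finsupp.coe_equivFunOnFinite_symm, Fin.val_ofNat,
    Nat.mod_eq_of_lt, if_neg]
  rw [show 6 + x - 3 = 3 + x by omega, show 3 + x + 3 = 6 + x by omega]

lemma weight_exponentVector_eq_zero (hn : 5 ≤ n) (E : ℕ) (h01 : e₀ + e₁ = 2 * E)
    (h4 : 2 * e₄ = e₀ + e₃) (h5 : 2 * e₅ = e₁ + e₃) (h3 : e₃ = e₂ + (n - 2) * E)
    (hg : ∀ j, 3 ≤ j → j ≤ n - 1 → g j + (j - 2) * E = e₃) :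
    weight (wD n) (exponentVector n e₀ e₁ e₂ e₃ e₄ e₅ g) = 0 := by
  rw [weight_wD_eq_zero_iff _ hn]
  have hv (a : ℕ) (ha : a < n + 3) : exponentAt (exponentVector n e₀ e₁ e₂ e₃ e₄ e₅ g) a = _ :=
    congrArg (Nat.cast : ℕ → ℤ) (exponentVector_ofNat (n := n) e₀ e₁ e₂ e₃ e₄ e₅ g ha)
  refine ⟨E, ?_, ?_, ?_, fun i hi => ?_⟩
  · simp only [hv 0 (by omega), hv 1 (by omega), ↓reduceIte]
    exact_mod_cast h01
  · simp only [hv 0 (by omega), hv 3 (by omega), hv 4 (by omega), ↓reduceIte]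
    exact_mod_cast h4
  · simp only [hv 1 (by omega), hv 3 (by omega), hv 5 (by omega), ↓reduceIte]
    exact_mod_cast h5
  rcases (by omega : i = 0 ∨ i = n - 2 ∨ (0 < i ∧ i < n - 2)) with rfl | rfl | ⟨h0, hi⟩
  · simp [armExponent_zero]
  · have h3' : (e₃ : ℤ) = e₂ + ((n - 2 : ℕ) : ℤ) * E := by exact_mod_cast h3
    simp only [armExponent_sub_two _ (by omega : 3 ≤ n), hv 2 (by omega), hv 3 (by omega),
      Nat.reduceEqDiff, ↓reduceIte]
    linarith
  · have hg' : (g (i + 2) : ℤ) + i * E = e₃ := by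
      exact_mod_cast show g (i + 2) + i * E = e₃ by simpa using hg (i + 2) (by omega) (by omega)
    simp (disch := omega) only [armExponent_of_pos _ h0 hi, hv (i + 5) (by omega), hv 3 (by omega),
      ↓reduceIte, if_neg, show i + 5 - 3 = i + 2 by omega]
    linarith

end WeightsD

/-- `(0,0,2), (1,1,0), (0,2,1), (2,0,1), (0,4,0), (4,0,0)` are the exponents of
`(x₁, x₂, x_{n-1})` in `Z₁, …, Z₆`. -/
theorem Nat.exists_combination_of_even {a₀ a₁ a₂ E : ℕ} (hE : a₀ + a₁ = 2 * E)
    (hpar : Even (a₀ + a₂ + E)) : ∃ c₁ c₂ c₃ c₄ c₅ c₆ : ℕ,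
      a₀ = c₂ + 2 * c₄ + 4 * c₆ ∧ a₁ = c₂ + 2 * c₃ + 4 * c₅ ∧ a₂ = 2 * c₁ + c₃ + c₄ := by
  -- take `(1,1,0)` exactly `min a₀ a₁` times; the rest is `(0, 2j, a₂)` or `(2j, 0, a₂)`
  -- with `a₂ ≡ j mod 2`
  obtain ⟨r, hr⟩ := hpar
  rcases le_total a₀ a₁ with h | h
  · exact ⟨(a₂ - (E - a₀) % 2) / 2, a₀, (E - a₀) % 2, 0, (E - a₀) / 2, 0, by omega, by omega,
      by omega⟩
  · exact ⟨(a₂ - (E - a₁) % 2) / 2, a₁, 0, (E - a₁) % 2, 0, (E - a₁) / 2, by omega, by omega,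
      by omega⟩

namespace WeightsD

variable {k : ℕ}

noncomputable def exponentZ₁ (k : ℕ) : Fin (2 * k + 1 + 3) →₀ ℕ :=
  exponentVector (2 * k + 1) 0 0 2 2 1 1 fun _ => 2
noncomputable def exponentZ₂ (k : ℕ) : Fin (2 * k + 1 + 3) →₀ ℕ :=
  exponentVector (2 * k + 1) 1 1 0 (2 * k - 1) k k fun j => 2 * k + 1 - j
noncomputable def exponentZ₃ (k : ℕ) : Fin (2 * k + 1 + 3) →₀ ℕ :=
  exponentVector (2 * k + 1) 0 2 1 (2 * k) k (k + 1) fun j => 2 * k + 2 - j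
noncomputable def exponentZ₄ (k : ℕ) : Fin (2 * k + 1 + 3) →₀ ℕ :=
  exponentVector (2 * k + 1) 2 0 1 (2 * k) (k + 1) k fun j => 2 * k + 2 - j
noncomputable def exponentZ₅ (k : ℕ) : Fin (2 * k + 1 + 3) →₀ ℕ :=
  exponentVector (2 * k + 1) 0 4 0 (4 * k - 2) (2 * k - 1) (2 * k + 1) fun j => 4 * k + 2 - 2 * j
noncomputable def exponentZ₆ (k : ℕ) : Fin (2 * k + 1 + 3) →₀ ℕ :=
  exponentVector (2 * k + 1) 4 0 0 (4 * k - 2) (2 * k + 1) (2 * k - 1) fun j => 4 * k + 2 - 2 * j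

def exponentsZ (k : ℕ) : Set (Fin (2 * k + 1 + 3) →₀ ℕ) :=
  {exponentZ₁ k, exponentZ₂ k, exponentZ₃ k, exponentZ₄ k, exponentZ₅ k, exponentZ₆ k}

lemma image_exponentsZ (hk : 2 ≤ k) :
    (fun d => monomial d (1 : ℂ)) '' exponentsZ k =
      {OZ₁ k, OZ₂ k, OZ₃ k, OZ₄ k, OZ₅ k, OZ₆ k} := by
  simp only [exponentsZ, Set.image_insert_eq, Set.image_singleton, exponentZ₁, exponentZ₂,
    exponentZ₃, exponentZ₄, exponentZ₅, exponentZ₆,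
    monomial_exponentVector _ _ _ _ _ _ _ (by omega : 3 ≤ 2 * k + 1),
    Nat.add_sub_cancel, pow_zero, pow_one, one_mul, mul_one]
  rfl

lemma exponentsZ_subset_mker (hk : 2 ≤ k) :
    ∀ d ∈ exponentsZ k, d ∈ AddMonoidHom.mker (weight (wD (2 * k + 1))) := by
  have hn : 5 ≤ 2 * k + 1 := by omega
  simp only [exponentsZ, Set.mem_insert_iff, Set.mem_singleton_iff]
  rintro d (rfl | rfl | rfl | rfl | rfl | rfl)
  · exact weight_exponentVector_eq_zero _ _ _ _ _ _ _ hn 0 (by omega) (by omega) (by omega)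
      (by omega) fun j _ _ => by omega
  · exact weight_exponentVector_eq_zero _ _ _ _ _ _ _ hn 1 (by omega) (by omega) (by omega)
      (by omega) fun j _ _ => by omega
  · exact weight_exponentVector_eq_zero _ _ _ _ _ _ _ hn 1 (by omega) (by omega) (by omega)
      (by omega) fun j _ _ => by omega
  · exact weight_exponentVector_eq_zero _ _ _ _ _ _ _ hn 1 (by omega) (by omega) (by omega)
      (by omega) fun j _ _ => by omega
  · exact weight_exponentVector_eq_zero _ _ _ _ _ _ _ hn 2 (by omega) (by omega) (by omega)
      (by omega) fun j _ _ => by omega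
  · exact weight_exponentVector_eq_zero _ _ _ _ _ _ _ hn 2 (by omega) (by omega) (by omega)
      (by omega) fun j _ _ => by omega

lemma exists_even_of_weight_eq_zero (hk : 2 ≤ k) {d : Fin (2 * k + 1 + 3) →₀ ℕ}
    (hd : weight (wD (2 * k + 1)) d = 0) : ∃ E : ℕ,
      d (Fin.ofNat _ 0) + d (Fin.ofNat _ 1) = 2 * E ∧
      Even (d (Fin.ofNat _ 0) + d (Fin.ofNat _ 2) + E) := by
  obtain ⟨E, h01, h4, -, harm⟩ := (weight_wD_eq_zero_iff d (by omega)).1 hd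
  have h2 := harm (2 * k + 1 - 2) le_rfl
  rw [armExponent_sub_two _ (by omega), show ((2 * k + 1 - 2 : ℕ) : ℤ) = 2 * k - 1 by omega]
    at h2
  simp only [exponentAt] at h01 h4 h2
  lift E to ℕ using (by omega)
  refine ⟨E, by exact_mod_cast h01, ?_⟩
  rw [← Int.even_coe_nat]
  push_cast
  exact ⟨(d (Fin.ofNat _ 4) : ℤ) - (k - 1) * E, by linear_combination h2 - h4⟩

theorem closure_exponentsZ (hk : 2 ≤ k) :
    AddSubmonoid.closure (exponentsZ k) = AddMonoidHom.mker (weight (wD (2 * k + 1))) := by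
  have hZ := exponentsZ_subset_mker hk
  refine le_antisymm (AddSubmonoid.closure_le.2 hZ) fun d hd => ?_
  obtain ⟨E, hE, hpar⟩ := exists_even_of_weight_eq_zero hk hd
  obtain ⟨c₁, c₂, c₃, c₄, c₅, c₆, h0, h1, h2⟩ := Nat.exists_combination_of_even hE hpar
  have hmem : c₁ • exponentZ₁ k + c₂ • exponentZ₂ k + c₃ • exponentZ₃ k + c₄ • exponentZ₄ k +
      c₅ • exponentZ₅ k + c₆ • exponentZ₆ k ∈ AddSubmonoid.closure (exponentsZ k) := by
    refine add_mem (add_mem (add_mem (add_mem (add_mem ?_ ?_) ?_) ?_) ?_) ?_ <;>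
      exact nsmul_mem (AddSubmonoid.subset_closure (by simp [exponentsZ])) _
  convert hmem using 1
  refine eq_of_weight_wD_eq_zero (by omega) hd (AddSubmonoid.closure_le.2 hZ hmem) fun a ha => ?_
  interval_cases a <;>
    simp (disch := omega) only [h0, h1, h2, Finsupp.add_apply, Finsupp.smul_apply, smul_eq_mul,
      exponentZ₁, exponentZ₂, exponentZ₃, exponentZ₄, exponentZ₅, exponentZ₆,
      exponentVector_ofNat, Nat.reduceEqDiff, ↓reduceIte] <;>
    ring

end WeightsD

/-- for `n = 2k+1` (`k ≥ 2`), the ring of invariants of the torus action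
on `S = ℂ[x₁, x₂, x_{2k}, y₀, …, y_{2k}]` is generated, as a `ℂ`-subalgebra, by the
six monomials `Z₁, …, Z₆`. -/
theorem statement8 (k : ℕ) (hk : 2 ≤ k) :
    invariants (wD (2 * k + 1))
      = Algebra.adjoin ℂ {OZ₁ k, OZ₂ k, OZ₃ k, OZ₄ k, OZ₅ k, OZ₆ k} := by
  rw [invariants_eq_adjoin_monomial _ _ (WeightsD.closure_exponentsZ hk),
    WeightsD.image_exponentsZ hk]
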